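/- arXiv:1710.07797 — 6 statements merged into one kernel-verified Lean document; each statement's English description precedes it below -/
import Mathlib

section
/- For any real q and any integer t ≥ 1, ∑_{k=1}^{t-1} (1/(t-k)) k^{-q} ≤ 2 t^{-min(q,1)} (1 + log t). -/
/-!
Write `m = min q 1`. For `1 ≤ k < t` we have `k^{-q} ≤ k^{-m}`, and since `1 - m ≥ 0`,
`k^{1-m} ≤ t^{1-m}`; with `1/(t-k) + 1/k = t/(k(t-k))` this gives
`k^{-m}/(t-k) ≤ t^{-m} (1/(t-k) + 1/k)`. Summing, the reflection `k ↦ t - k` turns both halves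
into the harmonic number `H_{t-1} ≤ H_t ≤ 1 + log t`.
-/

open Finset

lemma rpow_neg_div_sub_le {k t m : ℝ} (hk : 0 < k) (hkt : k < t) (hm : m ≤ 1) :
    k ^ (-m) / (t - k) ≤ t ^ (-m) * (1 / (t - k) + 1 / k) := by
  have ht : 0 < t := hk.trans hkt
  have htk : 0 < t - k := sub_pos.mpr hkt
  have hmono : k * k ^ (-m) ≤ t * t ^ (-m) := by
    have h := Real.rpow_le_rpow hk.le hkt.le (sub_nonneg.mpr hm)
    rwa [sub_eq_add_neg, Real.rpow_add hk, Real.rpow_add ht, Real.rpow_one,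
      Real.rpow_one] at h
  calc k ^ (-m) / (t - k) = k * k ^ (-m) / (k * (t - k)) := by field_simp
    _ ≤ t * t ^ (-m) / (k * (t - k)) := by gcongr
    _ = t ^ (-m) * (1 / (t - k) + 1 / k) := by field_simp; ring

lemma sum_Icc_one_sub_reflect {M : Type*} [AddCommMonoid M] (f : ℝ → M) (t : ℕ) :
    ∑ k ∈ Icc 1 (t - 1), f ((t : ℝ) - k) = ∑ k ∈ Icc 1 (t - 1), f k := by
  refine sum_nbij' (t - ·) (t - ·) ?_ ?_ ?_ ?_ ?_ <;> intro k hk <;> simp only [mem_Icc] at hk ⊢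
  · omega
  · omega
  · omega
  · omega
  · rw [Nat.cast_sub (by omega)]

lemma sum_Icc_one_sub_one_inv_le_one_add_log (t : ℕ) :
    ∑ k ∈ Icc 1 (t - 1), 1 / (k : ℝ) ≤ 1 + Real.log t :=
  calc ∑ k ∈ Icc 1 (t - 1), 1 / (k : ℝ)
      ≤ ∑ k ∈ Icc 1 t, 1 / (k : ℝ) :=
        sum_le_sum_of_subset_of_nonneg (Icc_subset_Icc_right (Nat.sub_le t 1))
          fun _ _ _ ↦ by positivity
    _ = harmonic t := by simp [harmonic_eq_sum_Icc]
    _ ≤ 1 + Real.log t := harmonic_le_one_add_log t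

lemma one_div_sub_mul_rpow_neg_le {k t : ℝ} (q : ℝ) (hk : 1 ≤ k) (hkt : k < t) :
    1 / (t - k) * k ^ (-q) ≤ t ^ (-min q 1) * (1 / (t - k) + 1 / k) :=
  calc 1 / (t - k) * k ^ (-q) ≤ k ^ (-min q 1) / (t - k) := by
        rw [one_div_mul_eq_div]
        gcongr
        exact min_le_left q 1
    _ ≤ _ := rpow_neg_div_sub_le (by linarith) hkt (min_le_right q 1)

theorem sum_inv_mul_rpow_le_general (q : ℝ) (t : ℕ) :
    ∑ k ∈ Finset.Icc 1 (t - 1), (1 / ((t : ℝ) - (k : ℝ))) * (k : ℝ) ^ (-q) ≤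
      2 * (t : ℝ) ^ (-(min q 1)) * (1 + Real.log t) := by
  set m := min q 1
  have hterm : ∀ k ∈ Icc 1 (t - 1), 1 / ((t : ℝ) - k) * (k : ℝ) ^ (-q) ≤
      (t : ℝ) ^ (-m) * (1 / ((t : ℝ) - k) + 1 / k) := by
    intro k hk
    obtain ⟨hk1, hkt⟩ := mem_Icc.mp hk
    exact one_div_sub_mul_rpow_neg_le q (by exact_mod_cast hk1)
      (by exact_mod_cast (by omega : k < t))
  calc _ ≤ ∑ k ∈ Icc 1 (t - 1), (t : ℝ) ^ (-m) * (1 / ((t : ℝ) - k) + 1 / k) :=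
        sum_le_sum hterm
    _ = (t : ℝ) ^ (-m) * (2 * ∑ k ∈ Icc 1 (t - 1), 1 / (k : ℝ)) := by
        rw [← mul_sum, sum_add_distrib, sum_Icc_one_sub_reflect (1 / ·)]
        ring
    _ ≤ (t : ℝ) ^ (-m) * (2 * (1 + Real.log t)) := by
        gcongr
        exact sum_Icc_one_sub_one_inv_le_one_add_log t
    _ = 2 * (t : ℝ) ^ (-m) * (1 + Real.log t) := by ring

/-- For any real q and integer t ≥ 1,
    ∑_{k=1}^{t-1} (1/(t-k)) k^{-q} ≤ 2 t^{-min(q,1)} (1 + log t). -/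
theorem sum_inv_mul_rpow_le (q : ℝ) (t : ℕ) (ht : 1 ≤ t) :
    ∑ k ∈ Finset.Icc 1 (t - 1), (1 / ((t : ℝ) - (k : ℝ))) * (k : ℝ) ^ (-q) ≤
      2 * (t : ℝ) ^ (-(min q 1)) * (1 + Real.log t) :=
  sum_inv_mul_rpow_le_general q t
end

section
/- Let H and K be separable Hilbert spaces, S : K → H a bounded linear operator, and P : H → H the orthogonal projection onto the closure of the range of S. Then for every bounded linear operator L : H → H and every λ > 0, ‖(I - P)L‖² ≤ λ ‖(S S* + λ I)^{-1/2} L L* (S S* + λ I)^{-1/2}‖. -/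
open ContinuousLinearMap
open scoped RealInnerProductSpace

set_option maxHeartbeats 1000000 in
set_option synthInstance.maxHeartbeats 400000 in
/-- Projection lemma (Rudi–Camoriano–Rosasco, Prop. 3). -/
theorem projection_operator_norm_bound
    {H K : Type*} [NormedAddCommGroup H] [InnerProductSpace ℝ H] [CompleteSpace H]
    [TopologicalSpace.SeparableSpace H]
    [NormedAddCommGroup K] [InnerProductSpace ℝ K] [CompleteSpace K]
    [TopologicalSpace.SeparableSpace K]
    (S : K →L[ℝ] H) (P : H →L[ℝ] H)
    (hPsa : IsSelfAdjoint P) (hPidem : P * P = P)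
    (hPfix : ∀ v : K, P (S v) = S v)
    (hPrange : ∀ f : H, P f ∈ closure (Set.range S))
    (lam : ℝ) (hlam : 0 < lam)
    (Q R : H →L[ℝ] H)
    (hQ₁ : (S ∘L ContinuousLinearMap.adjoint S + lam • (1 : H →L[ℝ] H)) * Q = 1)
    (hQ₂ : Q * (S ∘L ContinuousLinearMap.adjoint S + lam • (1 : H →L[ℝ] H)) = 1)
    (hRsa : IsSelfAdjoint R) (hRpos : R.IsPositive) (hRsq : R * R = Q)
    (L : H →L[ℝ] H) :
    ‖(1 - P) * L‖ ^ 2 ≤ lam * ‖R * (L ∘L ContinuousLinearMap.adjoint L) * R‖ := by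
  set T : H →L[ℝ] H := S ∘L ContinuousLinearMap.adjoint S + lam • (1 : H →L[ℝ] H) with hT
  set E : H →L[ℝ] H := 1 - P with hE
  set c : ℝ := ‖R * (L ∘L ContinuousLinearMap.adjoint L) * R‖ with hc_def
  have hc : 0 ≤ c := norm_nonneg _
  have hRadj : ContinuousLinearMap.adjoint R = R := isSelfAdjoint_iff'.mp hRsa
  have hPadj : ContinuousLinearMap.adjoint P = P := isSelfAdjoint_iff'.mp hPsa
  have hEadj : ContinuousLinearMap.adjoint E = E := by
    rw [hE, map_sub, hPadj, ← ContinuousLinearMap.star_eq_adjoint, star_one]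
  have hTadj : ContinuousLinearMap.adjoint T = T := by
    rw [hT, map_add, adjoint_comp, adjoint_adjoint, map_smul,
      ← ContinuousLinearMap.star_eq_adjoint, star_one]
  have hEinner : ∀ a b : H, ⟪E a, b⟫ = ⟪a, E b⟫ := by
    intro a b
    conv_lhs => rw [← hEadj]
    rw [adjoint_inner_left]
  have hRinner : ∀ a b : H, ⟪R a, b⟫ = ⟪a, R b⟫ := by
    intro a b
    conv_lhs => rw [← hRadj]
    rw [adjoint_inner_left]
  have hTinner : ∀ a b : H, ⟪T a, b⟫ = ⟪a, T b⟫ := by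
    intro a b
    conv_lhs => rw [← hTadj]
    rw [adjoint_inner_left]
  -- commutation facts
  have hQR : Q * R = R * Q := by rw [← hRsq, mul_assoc, hRsq]
  have hRT : R * T = T * R := by
    calc R * T = (T * Q) * (R * T) := by rw [hQ₁, one_mul]
    _ = T * ((Q * R) * T) := by simp only [mul_assoc]
    _ = T * ((R * Q) * T) := by rw [hQR]
    _ = (T * R) * (Q * T) := by simp only [mul_assoc]
    _ = T * R := by rw [hQ₂, mul_one]
  have hRTTR : R * T * T * R = T := by
    have h1 : R * T * T * R = (R * T) * (T * R) := by simp only [mul_assoc]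
    rw [h1, hRT, mul_assoc T R (T * R), ← mul_assoc R T R, hRT, mul_assoc T R R, hRsq,
      hQ₁, mul_one]
  set A : H →L[ℝ] H := T * R with hA
  have hRA : R * A = 1 := by
    rw [hA, ← mul_assoc, hRT, mul_assoc, hRsq, hQ₁]
  -- S* kills E x
  have hyS : ∀ x : H, ContinuousLinearMap.adjoint S (E x) = 0 := by
    intro x
    have h0 : E (S (ContinuousLinearMap.adjoint S (E x))) = 0 := by
      simp [hE, ContinuousLinearMap.sub_apply, hPfix]
    have : ⟪ContinuousLinearMap.adjoint S (E x), ContinuousLinearMap.adjoint S (E x)⟫ = 0 := by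
      rw [adjoint_inner_left, hEinner, h0, inner_zero_right]
    exact inner_self_eq_zero.mp this
  have hTy : ∀ x : H, T (E x) = lam • E x := by
    intro x
    rw [hT]
    simp [ContinuousLinearMap.add_apply, ContinuousLinearMap.comp_apply, hyS x]
  have hEE : E * E = E := by
    rw [hE]
    simp only [mul_sub, sub_mul, one_mul, mul_one, hPidem]
    abel
  have hynorm : ∀ x : H, ‖E x‖ ≤ ‖x‖ := by
    intro x
    have h1 : ‖E x‖ ^ 2 = ⟪x, E x⟫ := by
      rw [← real_inner_self_eq_norm_sq, hEinner]
      congr 1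
      rw [← ContinuousLinearMap.mul_apply, hEE]
    have h2 : ⟪x, E x⟫ ≤ ‖x‖ * ‖E x‖ := real_inner_le_norm _ _
    nlinarith [norm_nonneg (E x), norm_nonneg x]
  -- key pointwise bound
  have key : ∀ x : H, ‖ContinuousLinearMap.adjoint L (E x)‖ ^ 2 ≤ lam * c * ‖x‖ ^ 2 := by
    intro x
    set y := E x with hy
    set z := A y with hz
    have hRz : R z = y := by
      rw [hz, ← ContinuousLinearMap.mul_apply, hRA, ContinuousLinearMap.one_apply]
    have e1 : ⟪(L ∘L ContinuousLinearMap.adjoint L) y, y⟫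
        = ‖ContinuousLinearMap.adjoint L y‖ ^ 2 := by
      rw [ContinuousLinearMap.comp_apply, ← adjoint_inner_right, real_inner_self_eq_norm_sq]
    have e2 : ⟪(R * (L ∘L ContinuousLinearMap.adjoint L) * R) z, z⟫
        = ⟪(L ∘L ContinuousLinearMap.adjoint L) y, y⟫ := by
      have h' : (R * (L ∘L ContinuousLinearMap.adjoint L) * R) z
          = R ((L ∘L ContinuousLinearMap.adjoint L) (R z)) := rfl
      rw [h', hRinner, hRz]
    have e3 : ⟪(R * (L ∘L ContinuousLinearMap.adjoint L) * R) z, z⟫ ≤ c * ‖z‖ ^ 2 := by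
      calc ⟪(R * (L ∘L ContinuousLinearMap.adjoint L) * R) z, z⟫
          ≤ ‖(R * (L ∘L ContinuousLinearMap.adjoint L) * R) z‖ * ‖z‖ := real_inner_le_norm _ _
      _ ≤ (c * ‖z‖) * ‖z‖ := by
          apply mul_le_mul_of_nonneg_right _ (norm_nonneg _)
          exact le_opNorm _ _
      _ = c * ‖z‖ ^ 2 := by ring
    have hTyy : T y = lam • y := by rw [hy]; exact hTy x
    have e4 : ‖z‖ ^ 2 = lam * ‖y‖ ^ 2 := by
      have hz' : z = T (R y) := rfl
      have h1 : ⟪z, z⟫ = ⟪y, (R * T * T * R) y⟫ := by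
        conv_lhs => rw [hz', hTinner, hRinner]
        simp only [ContinuousLinearMap.mul_apply]
      rw [← real_inner_self_eq_norm_sq, ← real_inner_self_eq_norm_sq, h1, hRTTR, hTyy,
        real_inner_smul_right]
    have e5 : ‖y‖ ^ 2 ≤ ‖x‖ ^ 2 := by
      rw [hy]; exact pow_le_pow_left₀ (norm_nonneg _) (hynorm x) 2
    calc ‖ContinuousLinearMap.adjoint L y‖ ^ 2
        = ⟪(R * (L ∘L ContinuousLinearMap.adjoint L) * R) z, z⟫ := (e2.trans e1).symm
    _ ≤ c * ‖z‖ ^ 2 := e3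
    _ = lam * c * ‖y‖ ^ 2 := by rw [e4]; ring
    _ ≤ lam * c * ‖x‖ ^ 2 := by
        apply mul_le_mul_of_nonneg_left e5
        positivity
  -- transfer via adjoint
  have hnorm_eq : ‖E * L‖ = ‖ContinuousLinearMap.adjoint L ∘L E‖ := by
    have hadj : ContinuousLinearMap.adjoint (E * L) = ContinuousLinearMap.adjoint L ∘L E := by
      rw [ContinuousLinearMap.mul_def, adjoint_comp, hEadj]
    rw [← hadj, ← ContinuousLinearMap.star_eq_adjoint]
    exact (norm_star (E * L)).symm
  have hb : ‖ContinuousLinearMap.adjoint L ∘L E‖ ≤ Real.sqrt (lam * c) := by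
    apply opNorm_le_bound _ (Real.sqrt_nonneg _)
    intro x
    have hk := key x
    have hbd : ‖ContinuousLinearMap.adjoint L (E x)‖ ≤ Real.sqrt (lam * c) * ‖x‖ := by
      have h1 : ‖ContinuousLinearMap.adjoint L (E x)‖
          = Real.sqrt (‖ContinuousLinearMap.adjoint L (E x)‖ ^ 2) :=
        (Real.sqrt_sq (norm_nonneg _)).symm
      rw [h1]
      calc Real.sqrt (‖ContinuousLinearMap.adjoint L (E x)‖ ^ 2)
          ≤ Real.sqrt (lam * c * ‖x‖ ^ 2) := Real.sqrt_le_sqrt hk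
      _ = Real.sqrt (lam * c) * ‖x‖ := by
          rw [Real.sqrt_mul (by positivity), Real.sqrt_sq (norm_nonneg _)]
    simpa using hbd
  have hEL : ‖E * L‖ ≤ Real.sqrt (lam * c) := hnorm_eq ▸ hb
  calc ‖(1 - P) * L‖ ^ 2 = ‖E * L‖ ^ 2 := by rw [hE]
  _ ≤ Real.sqrt (lam * c) ^ 2 := by
      apply pow_le_pow_left₀ (norm_nonneg _) hEL
  _ = lam * c := Real.sq_sqrt (by positivity)
end

section
/- Let H and K be separable Hilbert spaces, S : K → H a bounded linear operator, and P : H → H the orthogonal projection onto the closure of the range of S. Then for every λ > 0, the operator inequality S (S* S + λ I)^{-1} S* ≼ P holds, and consequently I - P ≼ λ (S S* + λ I)^{-1}. -/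
open ContinuousLinearMap

/-- Loewner-order projection lemma: H, K separable Hilbert spaces, S : K → H bounded,
    P the orthogonal projection onto the closure of the range of S.  For λ > 0,
    with Jinv = (S*S + λI)⁻¹ and Kinv = (SS* + λI)⁻¹, one has
    S (S*S + λI)⁻¹ S* ≼ P and I - P ≼ λ (SS* + λI)⁻¹ in the Loewner order. -/
theorem projection_loewner_bounds
    {H K : Type*} [NormedAddCommGroup H] [InnerProductSpace ℝ H] [CompleteSpace H]
    [TopologicalSpace.SeparableSpace H]
    [NormedAddCommGroup K] [InnerProductSpace ℝ K] [CompleteSpace K]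
    [TopologicalSpace.SeparableSpace K]
    (S : K →L[ℝ] H) (P : H →L[ℝ] H)
    (hPsa : IsSelfAdjoint P) (hPidem : P * P = P)
    (hPfix : ∀ v : K, P (S v) = S v)
    (hPrange : ∀ f : H, P f ∈ closure (Set.range S))
    (lam : ℝ) (hlam : 0 < lam)
    (Jinv : K →L[ℝ] K)
    (hJ₁ : (ContinuousLinearMap.adjoint S ∘L S + lam • (1 : K →L[ℝ] K)) * Jinv = 1)
    (hJ₂ : Jinv * (ContinuousLinearMap.adjoint S ∘L S + lam • (1 : K →L[ℝ] K)) = 1)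
    (Kinv : H →L[ℝ] H)
    (hK₁ : (S ∘L ContinuousLinearMap.adjoint S + lam • (1 : H →L[ℝ] H)) * Kinv = 1)
    (hK₂ : Kinv * (S ∘L ContinuousLinearMap.adjoint S + lam • (1 : H →L[ℝ] H)) = 1) :
    (∀ f : H, 0 ≤ @inner ℝ _ _ ((P - S ∘L Jinv ∘L ContinuousLinearMap.adjoint S) f) f) ∧
    (∀ f : H, 0 ≤ @inner ℝ _ _ ((lam • Kinv - (1 - P)) f) f) := by
  have hPadj : ContinuousLinearMap.adjoint P = P :=
    (ContinuousLinearMap.isSelfAdjoint_iff' ).mp hPsa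
  set T := ContinuousLinearMap.adjoint S with hT
  -- pointwise versions of the inverse hypotheses
  have hKright : ∀ x : H, S (T (Kinv x)) + lam • Kinv x = x := by
    intro x
    have := congrArg (fun A : H →L[ℝ] H => A x) hK₁
    simpa [ContinuousLinearMap.mul_apply] using this
  have hKleft : ∀ x : H, Kinv (S (T x)) + lam • Kinv x = x := by
    intro x
    have := congrArg (fun A : H →L[ℝ] H => A x) hK₂
    simpa [ContinuousLinearMap.mul_apply, map_add, map_smul] using this
  have hJright : ∀ u : K, T (S (Jinv u)) + lam • Jinv u = u := by
    intro u
    have := congrArg (fun A : K →L[ℝ] K => A u) hJ₁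
    simpa [ContinuousLinearMap.mul_apply] using this
  -- intertwining : S ∘ Jinv = Kinv ∘ S
  have hSJ : ∀ u : K, S (Jinv u) = Kinv (S u) := by
    intro u
    have h1 := hKleft (S (Jinv u))
    have h2 : S (T (S (Jinv u)) + lam • Jinv u) = S u := by rw [hJright u]
    have h3 : S (T (S (Jinv u))) + lam • S (Jinv u) = S u := by
      simpa [map_add, map_smul] using h2
    calc S (Jinv u) = Kinv (S (T (S (Jinv u)))) + lam • Kinv (S (Jinv u)) := h1.symm
      _ = Kinv (S (T (S (Jinv u))) + lam • S (Jinv u)) := by simp [map_add, map_smul]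
      _ = Kinv (S u) := by rw [h3]
  -- the operator S Jinv S* equals 1 - lam • Kinv pointwise
  have hA : ∀ f : H, S (Jinv (T f)) = f - lam • Kinv f := by
    intro f
    have := hKleft f
    rw [hSJ (T f)]
    linear_combination (norm := abel) this
  -- ⟨P x, x⟩ = ‖P x‖ ^ 2
  have hproj : ∀ x : H, @inner ℝ _ _ (P x) x = ‖P x‖ ^ 2 := by
    intro x
    have hPP : P (P x) = P x := by
      have := congrArg (fun A : H →L[ℝ] H => A x) hPidem
      simpa [ContinuousLinearMap.mul_apply] using this
    have h := ContinuousLinearMap.adjoint_inner_right P x (P x)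
    rw [hPadj, hPP] at h
    rw [real_inner_comm, h, real_inner_self_eq_norm_sq]
  have hsub : ∀ x : H, @inner ℝ _ _ (x - P x) x = ‖x - P x‖ ^ 2 := by
    intro x
    have h1 : @inner ℝ _ _ x (P x) = ‖P x‖ ^ 2 := by
      rw [real_inner_comm]; exact hproj x
    have h2 : ‖x - P x‖ ^ 2 = ‖x‖ ^ 2 - 2 * @inner ℝ _ _ x (P x) + ‖P x‖ ^ 2 :=
      norm_sub_sq_real x (P x)
    rw [inner_sub_left, hproj x, real_inner_self_eq_norm_sq]
    rw [h1] at h2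
    linarith
  -- the main inequality
  have main : ∀ f : H, 0 ≤ @inner ℝ _ _ (lam • Kinv f - (f - P f)) f := by
    intro f
    set g := Kinv f with hg
    have hf : S (T g) + lam • g = f := hKright f
    -- ⟨g, f⟩ = ‖T g‖² + lam ‖g‖²
    have e1 : @inner ℝ _ _ g f = ‖T g‖ ^ 2 + lam * ‖g‖ ^ 2 := by
      rw [← hf, inner_add_right, real_inner_smul_right, real_inner_self_eq_norm_sq]
      have : @inner ℝ _ _ g (S (T g)) = ‖T g‖ ^ 2 := by
        rw [← ContinuousLinearMap.adjoint_inner_left, ← hT, real_inner_self_eq_norm_sq]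
      rw [this]
    -- f - P f = lam • (g - P g)
    have e2 : f - P f = lam • (g - P g) := by
      have hPf : P f = S (T g) + lam • P g := by
        rw [← hf]; simp [map_add, map_smul, hPfix (T g)]
      rw [hPf, ← hf, smul_sub]
      abel
    have e3 : @inner ℝ _ _ (f - P f) f = lam ^ 2 * ‖g - P g‖ ^ 2 := by
      rw [hsub f, e2, norm_smul]
      rw [Real.norm_eq_abs, abs_of_pos hlam, mul_pow]
    have e4 : ‖g - P g‖ ^ 2 ≤ ‖g‖ ^ 2 := by
      have := hsub g
      have h1 : @inner ℝ _ _ (g - P g) g = ‖g‖ ^ 2 - ‖P g‖ ^ 2 := by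
        rw [inner_sub_left, hproj g, real_inner_self_eq_norm_sq]
      nlinarith [sq_nonneg ‖P g‖]
    have expand : @inner ℝ _ _ (lam • g - (f - P f)) f
        = lam * (‖T g‖ ^ 2 + lam * ‖g‖ ^ 2) - lam ^ 2 * ‖g - P g‖ ^ 2 := by
      rw [inner_sub_left, real_inner_smul_left, e1, e3]
    rw [expand]
    nlinarith [sq_nonneg ‖T g‖]
  constructor
  · intro f
    have : (P - S ∘L Jinv ∘L T) f = lam • Kinv f - (f - P f) := by
      simp only [ContinuousLinearMap.sub_apply, ContinuousLinearMap.comp_apply, hA f]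
      abel
    rw [this]; exact main f
  · intro f
    have : (lam • Kinv - (1 - P)) f = lam • Kinv f - (f - P f) := by
      simp [ContinuousLinearMap.sub_apply]
    rw [this]; exact main f
end

section
/- Let L be a compact positive self-adjoint operator on a separable Hilbert space, and let {η_i} be a sequence of positive step-sizes with η_1 ‖L‖ ≤ 1 and η_i nonincreasing. For t ∈ ℕ, a non-negative integer k ≤ t-1, λ > 0, and 0 < ζ ≤ 1, define Π_{k+1}^t(L) = ∏_{i=k+1}^{t}(I - η_i L). Then ‖Π_{k+1}^t(L) (L + λ I)^{ζ}‖ ≤ (ζ / (e ∑_{i=k+1}^{t} η_i))^{ζ} + λ^{ζ}. -/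
open Finset ContinuousLinearMap

/-!
By the continuous functional calculus the operator is `g(L)` with
`g(x) = ∏ᵢ (1 - ηᵢ x) · (x + λ)^ζ`, so its norm is at most `sup g` over the spectrum of `L`,
which lies in `[0, ‖L‖]`. There `0 ≤ 1 - ηᵢ x ≤ exp(-ηᵢ x)`, so with `S = ∑ ηᵢ` one has
`g(x) ≤ exp(-S x) (x^ζ + λ^ζ)`, and `exp(-S x) x^ζ = (x exp(-S x / ζ))^ζ ≤ (ζ / (e S))^ζ`
because `y exp(-y) ≤ 1/e`.
-/

/-- The ordered product Π_{i=a}^{b} f i of operators (identity if a > b). -/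
noncomputable def opProd {H : Type*} [NormedAddCommGroup H] [InnerProductSpace ℂ H]
    [CompleteSpace H] (f : ℕ → (H →L[ℂ] H)) (a b : ℕ) : H →L[ℂ] H :=
  ((List.range (b + 1 - a)).map fun j => f (a + j)).prod

namespace Real

theorem prod_one_sub_le_exp_neg_sum {ι : Type*} (s : Finset ι) (c : ι → ℝ)
    (hc : ∀ i ∈ s, c i ≤ 1) : ∏ i ∈ s, (1 - c i) ≤ exp (-∑ i ∈ s, c i) := by
  rw [← sum_neg_distrib, exp_sum]
  refine prod_le_prod (fun i hi => sub_nonneg.2 (hc i hi)) fun i _ => ?_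
  linarith [add_one_le_exp (-c i)]

theorem exp_neg_mul_mul_rpow_le {S x ζ : ℝ} (hS : 0 < S) (hx : 0 ≤ x) (hζ : 0 < ζ) :
    exp (-(S * x)) * x ^ ζ ≤ (ζ / (exp 1 * S)) ^ ζ := by
  have hmax : x * exp (-(S * x / ζ)) ≤ ζ / (exp 1 * S) := by
    calc x * exp (-(S * x / ζ)) = ζ / S * (S * x / ζ * exp (-(S * x / ζ))) := by
          field_simp
      _ ≤ ζ / S * exp (-1) := by
          gcongr
          exact mul_exp_neg_le_exp_neg_one _
      _ = ζ / (exp 1 * S) := by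
          rw [exp_neg]
          field_simp
  calc exp (-(S * x)) * x ^ ζ = (x * exp (-(S * x / ζ))) ^ ζ := by
        rw [mul_rpow hx (exp_pos _).le, ← exp_mul, mul_comm]
        field_simp
    _ ≤ (ζ / (exp 1 * S)) ^ ζ := rpow_le_rpow (by positivity) hmax hζ.le

theorem mul_add_rpow_le_of_le_exp {p S x lam ζ : ℝ} (hS : 0 < S) (hx : 0 ≤ x) (hlam : 0 ≤ lam)
    (hζ0 : 0 < ζ) (hζ1 : ζ ≤ 1) (hp : p ≤ exp (-(S * x))) :
    p * (x + lam) ^ ζ ≤ (ζ / (exp 1 * S)) ^ ζ + lam ^ ζ := by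
  have hexp_le_one : exp (-(S * x)) ≤ 1 := exp_le_one_iff.2 (by nlinarith)
  calc p * (x + lam) ^ ζ ≤ exp (-(S * x)) * (x ^ ζ + lam ^ ζ) :=
        mul_le_mul hp (rpow_add_le_add_rpow hx hlam hζ0.le hζ1) (by positivity) (exp_pos _).le
    _ = exp (-(S * x)) * x ^ ζ + exp (-(S * x)) * lam ^ ζ := mul_add _ _ _
    _ ≤ (ζ / (exp 1 * S)) ^ ζ + lam ^ ζ :=
        add_le_add (exp_neg_mul_mul_rpow_le hS hx hζ0)
          (mul_le_of_le_one_left (by positivity) hexp_le_one)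

end Real

section CFC

variable {R A : Type*} {p : A → Prop} [CommRing R] [StarRing R] [MetricSpace R]
  [IsTopologicalRing R] [ContinuousStar R] [TopologicalSpace A] [Ring A] [StarRing A]
  [Algebra R A] [ContinuousFunctionalCalculus R A p]

theorem list_prod_map_range_cfc (f : ℕ → R → R) (a : A)
    (hf : ∀ j, ContinuousOn (f j) (spectrum R a)) (ha : p a) (n : ℕ) :
    ((List.range n).map fun j => cfc (f j) a).prod = cfc (fun x => ∏ j ∈ range n, f j x) a := by
  induction n with
  | zero => simp [cfc_const_one R a ha]
  | succ n ih =>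
    simp only [List.range_succ, List.map_append, List.prod_append, List.map_singleton,
      List.prod_singleton, ih, prod_range_succ]
    exact (cfc_mul _ _ a (continuousOn_finsetProd _ fun j _ => hf j) (hf n)).symm

theorem cfc_one_sub_const_mul (r : R) (a : A) (ha : p a) :
    cfc (fun x => 1 - r * x) a = 1 - r • a := by
  rw [cfc_sub _ _ a, cfc_const_one R a ha, cfc_const_mul_id r a ha]

end CFC

theorem cfc_rpow_add_smul_one {A : Type*} [Ring A] [StarRing A] [TopologicalSpace A]
    [Algebra ℝ A] [ContinuousFunctionalCalculus ℝ A IsSelfAdjoint]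
    [ContinuousMap.UniqueHom ℝ A] {a : A} (ha : IsSelfAdjoint a) (r : ℝ) {ζ : ℝ} (hζ : 0 < ζ) :
    cfc (fun x : ℝ => x ^ ζ) (a + r • 1) = cfc (fun x => (x + r) ^ ζ) a := by
  have hcont : Continuous fun x : ℝ => x ^ ζ := continuous_id.rpow_const fun _ => Or.inr hζ.le
  have hshift : a + r • 1 = cfc (fun x : ℝ => x + r) a := by
    rw [cfc_add_const r _ a, cfc_id' ℝ a, Algebra.algebraMap_eq_smul_one]
  rw [hshift, ← cfc_comp' (fun x : ℝ => x ^ ζ) (fun x => x + r) a hcont.continuousOn]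

section Operator

variable {H : Type*} [NormedAddCommGroup H] [InnerProductSpace ℂ H] [CompleteSpace H]

theorem opProd_cfc {L : H →L[ℂ] H} (hL : IsSelfAdjoint L) (f : ℕ → ℝ → ℝ)
    (hf : ∀ i, ContinuousOn (f i) (spectrum ℝ L)) (a b : ℕ) :
    opProd (fun i => cfc (f i) L) a b = cfc (fun x => ∏ i ∈ Icc a b, f i x) L := by
  simp only [opProd, list_prod_map_range_cfc (fun j => f (a + j)) L (fun j => hf _) hL,
    ← Ico_add_one_right_eq_Icc, prod_Ico_eq_prod_range]

theorem ContinuousLinearMap.IsPositive.spectrum_subset_Icc {L : H →L[ℂ] H} (hL : L.IsPositive) :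
    spectrum ℝ L ⊆ Set.Icc 0 ‖L‖ := fun x hx =>
  ⟨SpectrumRestricts.nnreal_iff.1 hL.spectrumRestricts x hx,
    calc x ≤ ‖x‖ := le_abs_self x
      _ ≤ ‖L‖ * ‖(1 : H →L[ℂ] H)‖ := by
          simpa using spectrum.subset_closedBall_norm_mul (𝕜 := ℝ) L hx
      _ ≤ ‖L‖ := mul_le_of_le_one_right (norm_nonneg L) norm_id_le⟩

end Operator

theorem gradient_product_power_bound_general
    {H : Type*} [NormedAddCommGroup H] [InnerProductSpace ℂ H] [CompleteSpace H]
    (L : H →L[ℂ] H) (hL : L.IsPositive)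
    (η : ℕ → ℝ) (hηpos : ∀ i, 0 < η i) (hηmono : ∀ i j, i ≤ j → η j ≤ η i)
    (hη1 : η 1 * ‖L‖ ≤ 1)
    (t : ℕ) (ht : 1 ≤ t) (k : ℕ) (hk : k ≤ t - 1)
    (lam : ℝ) (hlam : 0 < lam) (ζ : ℝ) (hζ0 : 0 < ζ) (hζ1 : ζ ≤ 1) :
    ‖opProd (fun i => 1 - η i • L) (k + 1) t ∘L
        cfc (fun x : ℝ => x ^ ζ) (L + lam • 1)‖ ≤
      (ζ / (Real.exp 1 * ∑ i ∈ Finset.Icc (k + 1) t, η i)) ^ ζ + lam ^ ζ := by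
  have hLsa : IsSelfAdjoint L := hL.isSelfAdjoint
  have hS : 0 < ∑ i ∈ Icc (k + 1) t, η i :=
    sum_pos (fun i _ => hηpos i) (nonempty_Icc.2 (by omega))
  have hfactor : (fun i => 1 - η i • L) = fun i => cfc (fun x : ℝ => 1 - η i * x) L :=
    funext fun i => (cfc_one_sub_const_mul (η i) L hLsa).symm
  rw [hfactor, opProd_cfc hLsa _ (fun i => by fun_prop), cfc_rpow_add_smul_one hLsa lam hζ0,
    ← ContinuousLinearMap.mul_def, ← cfc_mul _ _ L (by fun_prop)
      ((continuous_add_const lam).rpow_const fun _ => Or.inr hζ0.le).continuousOn]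
  refine norm_cfc_le (by positivity) fun x hx => ?_
  obtain ⟨hx0, hxL⟩ := hL.spectrum_subset_Icc hx
  have hstep : ∀ i ∈ Icc (k + 1) t, η i * x ≤ 1 := fun i hi =>
    calc η i * x ≤ η 1 * ‖L‖ :=
          mul_le_mul (hηmono 1 i (le_add_self.trans (mem_Icc.1 hi).1)) hxL hx0 (hηpos 1).le
      _ ≤ 1 := hη1
  have hprod_nonneg : 0 ≤ ∏ i ∈ Icc (k + 1) t, (1 - η i * x) :=
    prod_nonneg fun i hi => sub_nonneg.2 (hstep i hi)
  rw [Real.norm_eq_abs, abs_of_nonneg (mul_nonneg hprod_nonneg (by positivity))]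
  refine Real.mul_add_rpow_le_of_le_exp hS hx0 hlam.le hζ0 hζ1 ?_
  simpa [sum_mul] using Real.prod_one_sub_le_exp_neg_sum _ (fun i => η i * x) hstep

/-- Spectral bound for gradient-descent products: let L be a compact positive operator
    on a separable Hilbert space, η a nonincreasing positive step-size sequence with
    η₁‖L‖ ≤ 1.  Then for k ≤ t-1, λ > 0 and 0 < ζ ≤ 1,
    ‖Π_{i=k+1}^t (I - η_i L) (L + λI)^ζ‖ ≤ (ζ/(e ∑_{i=k+1}^t η_i))^ζ + λ^ζ. -/
theorem gradient_product_power_bound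
    {H : Type*} [NormedAddCommGroup H] [InnerProductSpace ℂ H] [CompleteSpace H]
    [TopologicalSpace.SeparableSpace H]
    (L : H →L[ℂ] H) (hL : L.IsPositive) (hLcompact : IsCompactOperator (⇑L))
    (η : ℕ → ℝ) (hηpos : ∀ i, 0 < η i) (hηmono : ∀ i j, i ≤ j → η j ≤ η i)
    (hη1 : η 1 * ‖L‖ ≤ 1)
    (t : ℕ) (ht : 1 ≤ t) (k : ℕ) (hk : k ≤ t - 1)
    (lam : ℝ) (hlam : 0 < lam) (ζ : ℝ) (hζ0 : 0 < ζ) (hζ1 : ζ ≤ 1) :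
    ‖opProd (fun i => 1 - η i • L) (k + 1) t ∘L
        cfc (fun x : ℝ => x ^ ζ) (L + lam • 1)‖ ≤
      (ζ / (Real.exp 1 * ∑ i ∈ Finset.Icc (k + 1) t, η i)) ^ ζ + lam ^ ζ :=
  gradient_product_power_bound_general L hL η hηpos hηmono hη1 t ht k hk lam hlam ζ hζ0 hζ1
end

section
/- Let T and T_x be positive self-adjoint bounded operators on a separable Hilbert space and λ > 0 with T + λ I boundedly invertible. If ‖(T + λ I)^{-1/2}(T - T_x)(T + λ I)^{-1/2}‖ ≤ 2/3, then ‖(T_x + λ I)^{1/2}(T + λ I)^{-1/2}‖² ≤ 5/3 and ‖(T_x + λ I)^{-1/2}(T + λ I)^{1/2}‖² ≤ 3. -/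
open ContinuousLinearMap

/-- If T, T_x are positive self-adjoint bounded operators on a separable Hilbert space,
    λ > 0, with positive square roots sqT, sqTx of T + λI, T_x + λI and their inverses
    invSqT, invSqTx, and ‖(T+λI)^{-1/2}(T - T_x)(T+λI)^{-1/2}‖ ≤ 2/3, then
    ‖(T_x+λI)^{1/2}(T+λI)^{-1/2}‖² ≤ 5/3 and ‖(T_x+λI)^{-1/2}(T+λI)^{1/2}‖² ≤ 3. -/
theorem operator_sandwich_bounds
    {H : Type*} [NormedAddCommGroup H] [InnerProductSpace ℝ H] [CompleteSpace H]
    [TopologicalSpace.SeparableSpace H]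
    (T Tx : H →L[ℝ] H)
    (hT : IsSelfAdjoint T) (hTx : IsSelfAdjoint Tx)
    (hTpos : T.IsPositive) (hTxpos : Tx.IsPositive)
    (lam : ℝ) (hlam : 0 < lam)
    (sqT invSqT sqTx invSqTx : H →L[ℝ] H)
    (hsqT : sqT.IsPositive) (hinvSqT : invSqT.IsPositive)
    (hsqTx : sqTx.IsPositive) (hinvSqTx : invSqTx.IsPositive)
    (hsqT2 : sqT * sqT = T + lam • 1)
    (hsqTx2 : sqTx * sqTx = Tx + lam • 1)
    (hT₁ : sqT * invSqT = 1) (hT₂ : invSqT * sqT = 1)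
    (hTx₁ : sqTx * invSqTx = 1) (hTx₂ : invSqTx * sqTx = 1)
    (hnorm : ‖invSqT * (T - Tx) * invSqT‖ ≤ 2 / 3) :
    ‖sqTx * invSqT‖ ^ 2 ≤ 5 / 3 ∧ ‖invSqTx * sqT‖ ^ 2 ≤ 3 := by
  set D : H →L[ℝ] H := invSqT * (T - Tx) * invSqT with hDdef
  have hstar_sqT : star sqT = sqT := hsqT.isSelfAdjoint
  have hstar_invSqT : star invSqT = invSqT := hinvSqT.isSelfAdjoint
  have hstar_sqTx : star sqTx = sqTx := hsqTx.isSelfAdjoint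
  have hstar_invSqTx : star invSqTx = invSqTx := hinvSqTx.isSelfAdjoint
  have hA : ∀ x : H →L[ℝ] H, sqT * (invSqT * x) = x := fun x => by
    rw [← mul_assoc, hT₁, one_mul]
  have hB : ∀ x : H →L[ℝ] H, invSqT * (sqT * x) = x := fun x => by
    rw [← mul_assoc, hT₂, one_mul]
  have hC : ∀ x : H →L[ℝ] H, sqTx * (invSqTx * x) = x := fun x => by
    rw [← mul_assoc, hTx₁, one_mul]
  have hD' : ∀ x : H →L[ℝ] H, invSqTx * (sqTx * x) = x := fun x => by
    rw [← mul_assoc, hTx₂, one_mul]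
  have h1 : invSqT * (T + lam • 1) * invSqT = 1 := by
    rw [← hsqT2]
    simp only [mul_assoc, hA, hB, hT₁, hT₂]
  have hM : invSqT * (Tx + lam • 1) * invSqT = 1 - D := by
    have hsub : (Tx + lam • 1 : H →L[ℝ] H) = (T + lam • 1) - (T - Tx) := by abel
    rw [hsub, mul_sub, sub_mul, h1, hDdef]
  have hnorm1 : ‖(1 : H →L[ℝ] H)‖ ≤ 1 := by
    rw [ContinuousLinearMap.one_def]; exact ContinuousLinearMap.norm_id_le
  constructor
  · have hcs : ‖sqTx * invSqT‖ ^ 2 = ‖star (sqTx * invSqT) * (sqTx * invSqT)‖ := by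
      rw [sq]; exact CStarRing.norm_star_mul_self.symm
    have hprod : star (sqTx * invSqT) * (sqTx * invSqT) = 1 - D := by
      rw [star_mul, hstar_sqTx, hstar_invSqT, ← hM, ← hsqTx2]
      simp only [mul_assoc]
    rw [hcs, hprod]
    calc ‖(1 : H →L[ℝ] H) - D‖ ≤ ‖(1 : H →L[ℝ] H)‖ + ‖D‖ := norm_sub_le _ _
      _ ≤ 1 + 2 / 3 := by linarith
      _ = 5 / 3 := by norm_num
  · set E : H →L[ℝ] H := sqT * (invSqTx * invSqTx) * sqT with hEdef
    have hEM : E * (invSqT * (Tx + lam • 1) * invSqT) = 1 := by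
      rw [← hsqTx2, hEdef]
      simp only [mul_assoc, hA, hB, hC, hD', hT₁, hT₂, hTx₁, hTx₂, mul_one]
    rw [hM] at hEM
    have hEeq : E = 1 + E * D := by
      have h := hEM
      rw [mul_sub, mul_one] at h
      rw [← h]; abel
    have hEnorm : ‖E‖ ≤ 3 := by
      have h2 : ‖E‖ ≤ ‖(1 : H →L[ℝ] H)‖ + ‖E * D‖ := by
        conv_lhs => rw [hEeq]
        exact norm_add_le _ _
      have h3 : ‖E * D‖ ≤ ‖E‖ * ‖D‖ := norm_mul_le _ _
      have h4 : ‖E‖ * ‖D‖ ≤ ‖E‖ * (2 / 3) := by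
        apply mul_le_mul_of_nonneg_left hnorm (norm_nonneg _)
      linarith
    have hcs : ‖invSqTx * sqT‖ ^ 2 = ‖star (invSqTx * sqT) * (invSqTx * sqT)‖ := by
      rw [sq]; exact CStarRing.norm_star_mul_self.symm
    have hprod : star (invSqTx * sqT) * (invSqTx * sqT) = E := by
      rw [star_mul, hstar_sqT, hstar_invSqTx, hEdef]
      simp only [mul_assoc]
    rw [hcs, hprod]
    exact hEnorm
end

section
/- Let ρ(·|x) be conditional probability measures on ℝ satisfying the moment condition ∫ y^{2l} dρ(y|x) ≤ l! M^l ν for all l ∈ ℕ, for constants M > 0 and ν ≥ 1. Then for every l ≥ 2 and every x, ∫ |y² - E[y²|x]|^l dρ(y|x) ≤ (1/2) l! (Mν)^{l-2} (2Mν)², where E[y²|x] = ∫ y² dρ(y|x) ≤ Mν. -/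
/-!
Pointwise, `|y² - m| ≤ max (y², m)` with `m = E[y²] ≥ 0`, so `|y² - m|^l ≤ y^{2l} + m^l`.
Integrating and using the moment hypothesis (at `l = 1` it gives `m ≤ Mν`) bounds the
`l`-th central moment by `l! M^l ν + (Mν)^l`, which is at most `2 l! (Mν)^l` because `ν ≤ ν^l`
and `1 ≤ l!`; this is `(1/2) l! (Mν)^{l-2} (2Mν)²`.
-/

open MeasureTheory

lemma abs_sub_pow_le_pow_add_pow {a b : ℝ} (ha : 0 ≤ a) (hb : 0 ≤ b) (l : ℕ) :
    |a - b| ^ l ≤ a ^ l + b ^ l := by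
  have hmax : |a - b| ^ l ≤ max a b ^ l :=
    pow_le_pow_left₀ (abs_nonneg _)
      (abs_sub_le_of_nonneg_of_le ha (le_max_left a b) hb (le_max_right a b)) l
  rcases max_choice a b with h | h <;> rw [h] at hmax <;>
    linarith [pow_nonneg ha l, pow_nonneg hb l]

lemma integral_abs_sub_const_pow_le {Ω : Type*} [MeasurableSpace Ω] {μ : Measure Ω}
    [IsProbabilityMeasure μ] {f : Ω → ℝ} (hf : 0 ≤ f) (hfm : AEStronglyMeasurable f μ)
    {c : ℝ} (hc : 0 ≤ c) {l : ℕ} (hfl : Integrable (fun ω => f ω ^ l) μ) :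
    ∫ ω, |f ω - c| ^ l ∂μ ≤ ∫ ω, f ω ^ l ∂μ + c ^ l := by
  have hbound : ∀ ω, |f ω - c| ^ l ≤ f ω ^ l + c ^ l :=
    fun ω => abs_sub_pow_le_pow_add_pow (hf ω) hc l
  have hdom : Integrable (fun ω => f ω ^ l + c ^ l) μ := hfl.add (integrable_const _)
  have hlhs : Integrable (fun ω => |f ω - c| ^ l) μ := by
    refine hdom.mono' ((hfm.sub aestronglyMeasurable_const).norm.pow l) ?_
    filter_upwards with ω
    rw [Real.norm_eq_abs, abs_pow, abs_abs]
    exact hbound ω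
  calc ∫ ω, |f ω - c| ^ l ∂μ ≤ ∫ ω, (f ω ^ l + c ^ l) ∂μ := integral_mono hlhs hdom hbound
    _ = ∫ ω, f ω ^ l ∂μ + c ^ l := by
      rw [integral_add hfl (integrable_const _), integral_const, probReal_univ, one_smul]

lemma factorial_mul_pow_mul_add_pow_le {M ν m : ℝ} (hM : 0 ≤ M) (hν : 1 ≤ ν) (hm : 0 ≤ m)
    (hmM : m ≤ M * ν) {l : ℕ} (hl : 1 ≤ l) :
    l.factorial * M ^ l * ν + m ^ l ≤ 2 * l.factorial * (M * ν) ^ l := by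
  have hfac : (1 : ℝ) ≤ l.factorial := by exact_mod_cast l.factorial_pos
  have hMν : 0 ≤ (M * ν) ^ l := pow_nonneg (hm.trans hmM) l
  have hfirst : M ^ l * ν ≤ (M * ν) ^ l := by
    rw [mul_pow]
    exact mul_le_mul_of_nonneg_left (le_self_pow₀ hν (by omega)) (pow_nonneg hM l)
  have hsecond : m ^ l ≤ (M * ν) ^ l := pow_le_pow_left₀ hm hmM l
  nlinarith

lemma two_mul_factorial_mul_pow_eq {x : ℝ} {l : ℕ} (hl : 2 ≤ l) :
    2 * l.factorial * x ^ l = 1 / 2 * l.factorial * x ^ (l - 2) * (2 * x) ^ 2 := by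
  obtain ⟨k, rfl⟩ := Nat.exists_eq_add_of_le hl
  rw [Nat.add_sub_cancel_left]
  ring

/-- Bernstein moment condition for y² under a conditional measure satisfying
    ∫ y^{2l} dρ ≤ l! M^l ν for all l ≥ 1 (with M > 0, ν ≥ 1): for every l ≥ 2,
    ∫ |y² - E[y²]|^l dρ ≤ (1/2) l! (Mν)^{l-2} (2Mν)², and E[y²] ≤ Mν. -/
theorem bernstein_moment_ysq (ρ : Measure ℝ) [IsProbabilityMeasure ρ]
    (M ν : ℝ) (hM : 0 < M) (hν : 1 ≤ ν)
    (hint : ∀ l : ℕ, 1 ≤ l → Integrable (fun y : ℝ => |y| ^ (2 * l)) ρ)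
    (hmom : ∀ l : ℕ, 1 ≤ l → ∫ y, y ^ (2 * l) ∂ρ ≤ (l.factorial : ℝ) * M ^ l * ν) :
    (∫ y, y ^ 2 ∂ρ) ≤ M * ν ∧
    ∀ l : ℕ, 2 ≤ l →
      (∫ y, |y ^ 2 - ∫ y', y' ^ 2 ∂ρ| ^ l ∂ρ) ≤
        (1 / 2) * (l.factorial : ℝ) * (M * ν) ^ (l - 2) * (2 * M * ν) ^ 2 := by
  have hm0 : 0 ≤ ∫ y, y ^ 2 ∂ρ := integral_nonneg fun y => sq_nonneg y
  have hm : ∫ y, y ^ 2 ∂ρ ≤ M * ν := by simpa using hmom 1 le_rfl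
  refine ⟨hm, fun l hl => ?_⟩
  have hl1 : 1 ≤ l := by omega
  have hint_sq : Integrable (fun y : ℝ => (y ^ 2) ^ l) ρ := by
    simpa only [pow_mul, sq_abs] using hint l hl1
  have hmom_sq : ∫ y, (y ^ 2) ^ l ∂ρ ≤ l.factorial * M ^ l * ν := by
    simpa only [pow_mul] using hmom l hl1
  calc ∫ y, |y ^ 2 - ∫ y', y' ^ 2 ∂ρ| ^ l ∂ρ
      ≤ ∫ y, (y ^ 2) ^ l ∂ρ + (∫ y', y' ^ 2 ∂ρ) ^ l :=
        integral_abs_sub_const_pow_le (fun y => sq_nonneg y) (by fun_prop) hm0 hint_sq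
    _ ≤ l.factorial * M ^ l * ν + (∫ y', y' ^ 2 ∂ρ) ^ l := by gcongr
    _ ≤ 2 * l.factorial * (M * ν) ^ l :=
        factorial_mul_pow_mul_add_pow_le hM.le hν hm0 hm hl1
    _ = _ := by rw [two_mul_factorial_mul_pow_eq hl, mul_assoc 2 M ν]
end
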